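/- (ATN identification.) Under consistency of the potential outcomes and Assumption (A6), with p_N := P(G=N) > 0, E[ ( 1{G=N}/p_N − e_N(X)·1{G=C}/(p_N·e_C(X)) ) · ΔY ] = ATN := E[(Y₁^{(0,1)} − Y₁^{(0,0)})·1{G=N}]/p_N, the average treatment effect of the policy on the neighboring controls. -/

import Mathlib

open MeasureTheory ProbabilityTheory Filter Topology

/-- Group label: `T` = treated (`g(A)=(1,0)`), `N` = neighboring control (`g(A)=(0,1)`),
`C` = non-neighboring control (`g(A)=(0,0)`). -/
inductive GLabel : Type
  | T | N | C
  deriving DecidableEq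

instance : MeasurableSpace GLabel := ⊤

/-- The σ-algebra `𝔛` generated by the covariates `X`. -/
def sigmaX {Ω : Type} {q : ℕ} (X : Ω → (Fin q → ℝ)) : MeasurableSpace Ω :=
  MeasurableSpace.comap X inferInstance

/-- The indicator `1{G = g}` as a real-valued function. -/
def indG {Ω : Type} (G : Ω → GLabel) (g : GLabel) (ω : Ω) : ℝ :=
  if G ω = g then 1 else 0

/-- `f` is a version of the conditional expectation `E[Z ∣ G = g, X]`:
it is measurable and `E[Z·1{G=g} ∣ 𝔛] = f(X)·e_g(X)` `P`-a.s. -/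
def IsCondVersion {Ω : Type} [MeasurableSpace Ω] (P : Measure Ω) {q : ℕ}
    (X : Ω → (Fin q → ℝ)) (G : Ω → GLabel) (e : GLabel → (Fin q → ℝ) → ℝ)
    (g : GLabel) (Z : Ω → ℝ) (f : (Fin q → ℝ) → ℝ) : Prop :=
  Measurable f ∧
    P[(fun ω => Z ω * indG G g ω) | sigmaX X] =ᵐ[P] (fun ω => f (X ω) * e g (X ω))

/-!
On `{G = N}` consistency turns `ΔY` into the effect `Y₁^{(0,1)} - Y₁^{(0,0)}` plus the untreated
trend `Z = Y₁^{(0,0)} - Y₀^{(0,0)}`, and on `{G = C}` into `Z` alone. So the weighted integral is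
`p_N⁻¹ (E[(Y₁^{(0,1)} - Y₁^{(0,0)}) 1_N] + E[Z 1_N] - E[(e_N/e_C)(X) Z 1_C])`. Conditioning on `X`,
`E[Z 1_N] = E[g_N(X) e_N(X)]` and `E[(e_N/e_C)(X) Z 1_C] = E[(e_N/e_C)(X) g_C(X) e_C(X)]`, and these
agree by (A6).
-/

section indG

variable {Ω : Type} {G : Ω → GLabel}

theorem measurable_indG [MeasurableSpace Ω] (hG : Measurable G) (g : GLabel) :
    Measurable (indG G g) :=
  Measurable.ite (hG (MeasurableSpace.measurableSet_top : MeasurableSet {g}))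
    measurable_const measurable_const

theorem norm_indG_le_one (g : GLabel) (ω : Ω) : ‖indG G g ω‖ ≤ 1 := by
  unfold indG; split_ifs <;> simp

theorem MeasureTheory.Integrable.mul_indG [MeasurableSpace Ω] {P : Measure Ω} {f : Ω → ℝ}
    (hf : Integrable f P) (hG : Measurable G) (g : GLabel) :
    Integrable (fun ω => f ω * indG G g ω) P :=
  hf.mul_bdd (measurable_indG hG g).aestronglyMeasurable (ae_of_all _ (norm_indG_le_one g))

end indG

theorem Real.norm_div_le_inv {a b ε : ℝ} (hε : 0 < ε) (ha₀ : 0 ≤ a) (ha₁ : a ≤ 1) (hb : ε ≤ b) :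
    ‖a / b‖ ≤ ε⁻¹ := by
  rw [Real.norm_of_nonneg (div_nonneg ha₀ (hε.le.trans hb)), ← one_div]
  exact div_le_div₀ zero_le_one ha₁ hε hb

theorem MeasureTheory.integral_mul_eq_integral_mul_condExp {Ω : Type*} {m m₀ : MeasurableSpace Ω}
    {μ : Measure[m₀] Ω} [IsFiniteMeasure μ] (hm : m ≤ m₀) {f g : Ω → ℝ}
    (hf : StronglyMeasurable[m] f) (hg : Integrable g μ) (c : ℝ) (hf_bound : ∀ᵐ ω ∂μ, ‖f ω‖ ≤ c) :
    ∫ ω, f ω * g ω ∂μ = ∫ ω, f ω * μ[g | m] ω ∂μ := by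
  rw [← integral_condExp hm]
  exact integral_congr_ae (condExp_stronglyMeasurable_mul_of_bound hm hf hg c hf_bound)

theorem IsCondVersion.integral_mul_indG_eq {Ω : Type} [MeasurableSpace Ω] {P : Measure Ω}
    [IsFiniteMeasure P] {q : ℕ} {X : Ω → (Fin q → ℝ)} {G : Ω → GLabel}
    {e : GLabel → (Fin q → ℝ) → ℝ} {g : GLabel} {Z : Ω → ℝ} {f : (Fin q → ℝ) → ℝ}
    (hf : IsCondVersion P X G e g Z f) (hX : Measurable X) :
    ∫ ω, Z ω * indG G g ω ∂P = ∫ ω, f (X ω) * e g (X ω) ∂P := by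
  rw [← integral_condExp hX.comap_le]
  exact integral_congr_ae hf.2

theorem IsCondVersion.integral_comp_mul_eq {Ω : Type} [MeasurableSpace Ω] {P : Measure Ω}
    [IsFiniteMeasure P] {q : ℕ} {X : Ω → (Fin q → ℝ)} {G : Ω → GLabel}
    {e : GLabel → (Fin q → ℝ) → ℝ} {g : GLabel} {Z : Ω → ℝ} {f : (Fin q → ℝ) → ℝ}
    (hf : IsCondVersion P X G e g Z f) (hX : Measurable X)
    (hZ : Integrable (fun ω => Z ω * indG G g ω) P) {φ : (Fin q → ℝ) → ℝ} (hφ : Measurable φ)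
    (c : ℝ) (hφ_bound : ∀ x, ‖φ x‖ ≤ c) :
    ∫ ω, φ (X ω) * (Z ω * indG G g ω) ∂P = ∫ ω, φ (X ω) * (f (X ω) * e g (X ω)) ∂P := by
  have hφX : StronglyMeasurable[sigmaX X] (fun ω => φ (X ω)) :=
    (hφ.comp (Measurable.of_comap_le le_rfl)).stronglyMeasurable
  rw [integral_mul_eq_integral_mul_condExp hX.comap_le hφX hZ c (ae_of_all _ fun ω => hφ_bound _)]
  exact integral_congr_ae (hf.2.mono fun ω hω => congrArg (φ (X ω) * ·) hω)

theorem stmt_10_general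
    {Ω : Type} [MeasurableSpace Ω] (P : Measure Ω) [IsProbabilityMeasure P]
    {q : ℕ} (X : Ω → (Fin q → ℝ)) (hX : Measurable X)
    (G : Ω → GLabel) (hG : Measurable G)
    (Y0 Y1 : Ω → ℝ)
    (e : GLabel → (Fin q → ℝ) → ℝ) (he : ∀ g, Measurable (e g))
    (he1 : ∀ g x, e g x ≤ 1)
    (ε : ℝ) (hε : 0 < ε) (hpos : ∀ g x, ε ≤ e g x)
    (Y101 Y100 Y000 : Ω → ℝ)
    (hI01 : Integrable Y101 P) (hI00 : Integrable Y100 P) (hI000 : Integrable Y000 P)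
    (hconsN : ∀ᵐ ω ∂P, G ω = GLabel.N → Y1 ω = Y101 ω)
    (hconsC : ∀ᵐ ω ∂P, G ω = GLabel.C → Y1 ω = Y100 ω)
    (hcons0 : Y0 =ᵐ[P] Y000)
    (gN gC : (Fin q → ℝ) → ℝ)
    (hgN : IsCondVersion P X G e GLabel.N (fun ω => Y100 ω - Y000 ω) gN)
    (hgC : IsCondVersion P X G e GLabel.C (fun ω => Y100 ω - Y000 ω) gC)
    (hA6 : ∀ᵐ ω ∂P, gN (X ω) = gC (X ω))
    :
    ∫ ω, (indG G GLabel.N ω / (P {ω | G ω = GLabel.N}).toReal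
          - e GLabel.N (X ω) * indG G GLabel.C ω / ((P {ω | G ω = GLabel.N}).toReal * e GLabel.C (X ω))) *
        (Y1 ω - Y0 ω) ∂P
      = (∫ ω, (Y101 ω - Y100 ω) * indG G GLabel.N ω ∂P) / (P {ω | G ω = GLabel.N}).toReal := by
  set pN := (P {ω | G ω = GLabel.N}).toReal
  set Z : Ω → ℝ := fun ω => Y100 ω - Y000 ω
  set r : (Fin q → ℝ) → ℝ := fun x => e GLabel.N x / e GLabel.C x
  have hr_bound : ∀ x, ‖r x‖ ≤ ε⁻¹ := fun x =>
    Real.norm_div_le_inv hε (hε.le.trans (hpos _ _)) (he1 _ _) (hpos _ _)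
  have hr : Measurable r := (he _).div (he _)
  have hZ : Integrable Z P := hI00.sub hI000
  have hZC : ∫ ω, r (X ω) * (Z ω * indG G GLabel.C ω) ∂P
      = ∫ ω, gN (X ω) * e GLabel.N (X ω) ∂P := by
    rw [hgC.integral_comp_mul_eq hX (hZ.mul_indG hG _) (φ := r) hr ε⁻¹ hr_bound]
    refine integral_congr_ae (hA6.mono fun ω hω => ?_)
    have : e GLabel.C (X ω) ≠ 0 := (hε.trans_le (hpos _ _)).ne'
    simp only [r, hω]; field_simp
  have hintegrand : (fun ω => (indG G GLabel.N ω / pN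
        - e GLabel.N (X ω) * indG G GLabel.C ω / (pN * e GLabel.C (X ω))) * (Y1 ω - Y0 ω))
      =ᵐ[P] fun ω => pN⁻¹ * ((Y101 ω - Y100 ω) * indG G GLabel.N ω + Z ω * indG G GLabel.N ω
        - r (X ω) * (Z ω * indG G GLabel.C ω)) := by
    filter_upwards [hconsN, hconsC, hcons0] with ω hN hC h0
    rcases hGω : G ω with _ | _ | _ <;> simp only [indG, hGω, hN, hC, h0, r, Z, reduceCtorEq,
      if_true, if_false] <;> ring
  have hATN_int : Integrable (fun ω => (Y101 ω - Y100 ω) * indG G GLabel.N ω) P :=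
    (hI01.sub hI00).mul_indG hG _
  have hZN_int := hZ.mul_indG hG GLabel.N
  have hZC_int : Integrable (fun ω => r (X ω) * (Z ω * indG G GLabel.C ω)) P :=
    (hZ.mul_indG hG _).bdd_mul (hr.comp hX).aestronglyMeasurable (ae_of_all _ fun ω => hr_bound _)
  rw [integral_congr_ae hintegrand, integral_const_mul,
    integral_sub (hATN_int.fun_add hZN_int) hZC_int, integral_add hATN_int hZN_int,
    hgN.integral_mul_indG_eq hX, hZC, add_sub_cancel_right, inv_mul_eq_div]

theorem stmt_10
    {Ω : Type} [MeasurableSpace Ω] (P : Measure Ω) [IsProbabilityMeasure P]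
    {q : ℕ} (X : Ω → (Fin q → ℝ)) (hX : Measurable X)
    (G : Ω → GLabel) (hG : Measurable G)
    (Y0 Y1 : Ω → ℝ) (hY0 : Integrable Y0 P) (hY1 : Integrable Y1 P)
    (e : GLabel → (Fin q → ℝ) → ℝ) (he : ∀ g, Measurable (e g))
    (he1 : ∀ g x, e g x ≤ 1)
    (hprop : ∀ g : GLabel,
      P[(fun ω => indG G g ω) | sigmaX X] =ᵐ[P] (fun ω => e g (X ω)))
    (ε : ℝ) (hε : 0 < ε) (hpos : ∀ g x, ε ≤ e g x)
    (hpN : 0 < (P {ω | G ω = GLabel.N}).toReal)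
    (Y110 Y111 Y101 Y100 Y000 : Ω → ℝ)
    (hI10 : Integrable Y110 P) (hI11 : Integrable Y111 P)
    (hI01 : Integrable Y101 P) (hI00 : Integrable Y100 P) (hI000 : Integrable Y000 P)
    (hconsT : ∀ᵐ ω ∂P, G ω = GLabel.T → Y1 ω = Y110 ω)
    (hconsN : ∀ᵐ ω ∂P, G ω = GLabel.N → Y1 ω = Y101 ω)
    (hconsC : ∀ᵐ ω ∂P, G ω = GLabel.C → Y1 ω = Y100 ω)
    (hcons0 : Y0 =ᵐ[P] Y000)
    (gN gC : (Fin q → ℝ) → ℝ)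
    (hgN : IsCondVersion P X G e GLabel.N (fun ω => Y100 ω - Y000 ω) gN)
    (hgC : IsCondVersion P X G e GLabel.C (fun ω => Y100 ω - Y000 ω) gC)
    (hA6 : ∀ᵐ ω ∂P, gN (X ω) = gC (X ω))
    :
    ∫ ω, (indG G GLabel.N ω / (P {ω | G ω = GLabel.N}).toReal
          - e GLabel.N (X ω) * indG G GLabel.C ω / ((P {ω | G ω = GLabel.N}).toReal * e GLabel.C (X ω))) *
        (Y1 ω - Y0 ω) ∂P
      = (∫ ω, (Y101 ω - Y100 ω) * indG G GLabel.N ω ∂P) / (P {ω | G ω = GLabel.N}).toReal :=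
  stmt_10_general P X hX G hG Y0 Y1 e he he1 ε hε hpos Y101 Y100 Y000 hI01 hI00 hI000 hconsN hconsC
    hcons0 gN gC hgN hgC hA6
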